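/- For any complex polynomial p(z) = Σ_{k=0}^n a_k z^k of degree n ≥ 1, the maximum of |p(z)| over the unit circle satisfies max_{|z|=1} |p(z)| ≥ |a_0| + |a_n|. -/

import Mathlib

/-!
Let `ζ` be a primitive `n`-th root of unity. Averaging `p` over the rotated points `ζ ^ j * z`
kills every coefficient except `a 0` and `a n`, so `(1 / n) ∑ j, p (ζ ^ j * z) = a 0 + a n * z ^ n`.
Choosing `z` on the unit circle with `a n * z ^ n` on the ray of `a 0` makes the right side have
modulus `‖a 0‖ + ‖a n‖`, and some term of the average is at least as large as the average.
-/

open Finset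

namespace IsPrimitiveRoot

variable {R : Type*} [CommRing R] [IsDomain R] {ζ : R} {n : ℕ}

theorem geom_sum_pow_eq_zero_of_not_dvd (hζ : IsPrimitiveRoot ζ n) {k : ℕ} (hk : ¬n ∣ k) :
    ∑ j ∈ range n, (ζ ^ k) ^ j = 0 := by
  refine eq_zero_of_ne_zero_of_mul_left_eq_zero
    (sub_ne_zero_of_ne (Ne.symm <| mt (hζ.pow_eq_one_iff_dvd k).mp hk)) ?_
  rw [mul_neg_geom_sum, ← pow_mul, mul_comm, pow_mul, hζ.pow_eq_one, one_pow, sub_self]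

theorem sum_rotations_sum_range_mul_pow (hζ : IsPrimitiveRoot ζ n) (hn : n ≠ 0) (a : ℕ → R)
    (z : R) :
    ∑ j ∈ range n, ∑ k ∈ range (n + 1), a k * (ζ ^ j * z) ^ k = n * (a 0 + a n * z ^ n) := by
  have hterm (k : ℕ) : ∑ j ∈ range n, a k * (ζ ^ j * z) ^ k =
      a k * z ^ k * ∑ j ∈ range n, (ζ ^ k) ^ j := by
    rw [mul_sum]
    exact sum_congr rfl fun j _ => by ring
  rw [sum_comm, sum_congr rfl fun k _ => hterm k,
    sum_eq_add_of_mem 0 n (by simp) (by simp) hn.symm]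
  · simp only [pow_zero, mul_one, one_pow, sum_const, card_range, nsmul_eq_mul, hζ.pow_eq_one]
    ring
  · intro k hk hk0n
    rw [hζ.geom_sum_pow_eq_zero_of_not_dvd, mul_zero]
    exact fun hdvd => hk0n.2 (Nat.eq_of_dvd_of_lt_two_mul hk0n.1 hdvd (by grind))

end IsPrimitiveRoot

theorem Complex.exists_norm_eq_one_norm_add_mul_pow (a b : ℂ) {n : ℕ} (hn : n ≠ 0) :
    ∃ z : ℂ, ‖z‖ = 1 ∧ ‖a + b * z ^ n‖ = ‖a‖ + ‖b‖ := by
  refine ⟨exp (((arg a - arg b) / n : ℝ) * I), norm_exp_ofReal_mul_I _, ?_⟩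
  have hpow : exp (((arg a - arg b) / n : ℝ) * I) ^ n = exp (arg a * I) / exp (arg b * I) := by
    rw [← exp_nat_mul, ← exp_sub]
    push_cast
    field_simp
  have hray : a + b * exp (((arg a - arg b) / n : ℝ) * I) ^ n =
      (‖a‖ + ‖b‖ : ℝ) * exp (arg a * I) :=
    calc a + b * exp (((arg a - arg b) / n : ℝ) * I) ^ n
        = ‖a‖ * exp (arg a * I) + ‖b‖ * exp (arg b * I) * (exp (arg a * I) / exp (arg b * I)) := by
          rw [hpow, norm_mul_exp_arg_mul_I, norm_mul_exp_arg_mul_I]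
      _ = (‖a‖ + ‖b‖ : ℝ) * exp (arg a * I) := by
          field_simp [exp_ne_zero]
          push_cast
          ring
  rw [hray, norm_mul, norm_exp_ofReal_mul_I, mul_one, norm_real,
    Real.norm_of_nonneg (by positivity)]

theorem max_modulus_ge_coeff_sum (n : ℕ) (hn : 1 ≤ n) (a : ℕ → ℂ)
    (p : ℂ → ℂ) (hp : ∀ z, p z = ∑ k ∈ range (n + 1), a k * z ^ k) :
    ∃ z : ℂ, ‖z‖ = 1 ∧
      ‖a 0‖ + ‖a n‖ ≤ ‖p z‖ := by
  have hn0 : n ≠ 0 := by omega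
  obtain ⟨ζ, hζ⟩ : ∃ ζ : ℂ, IsPrimitiveRoot ζ n := ⟨_, Complex.isPrimitiveRoot_exp n hn0⟩
  obtain ⟨z, hz, hnorm⟩ := Complex.exists_norm_eq_one_norm_add_mul_pow (a 0) (a n) hn0
  have hsum : ∑ _j ∈ range n, (‖a 0‖ + ‖a n‖) ≤ ∑ j ∈ range n, ‖p (ζ ^ j * z)‖ :=
    calc ∑ _j ∈ range n, (‖a 0‖ + ‖a n‖)
        = ‖∑ j ∈ range n, p (ζ ^ j * z)‖ := by
          simp_rw [hp, hζ.sum_rotations_sum_range_mul_pow hn0, norm_mul, Complex.norm_natCast,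
            hnorm, sum_const, card_range, nsmul_eq_mul]
      _ ≤ ∑ j ∈ range n, ‖p (ζ ^ j * z)‖ := norm_sum_le _ _
  obtain ⟨j, -, hj⟩ := exists_le_of_sum_le (nonempty_range_iff.mpr hn0) hsum
  refine ⟨ζ ^ j * z, ?_, hj⟩
  rw [norm_mul, norm_pow, hζ.norm'_eq_one hn0, one_pow, one_mul, hz]
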